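/- Let ε > 0 and x ∈ ℝ² with |x| > 2ε (Euclidean norm), and let F : ℝ² → ℝ be the function F = (1/(2ε²))·(𝟙_{B_ε(0)} − 𝟙_{B_ε(x)}), where B_ε(y) denotes the closed Euclidean ball of radius ε centred at y. Then the function (z,z') ↦ F(z)F(z')·log|z−z'| is Lebesgue-integrable on ℝ² × ℝ², and (1/(2π²)) · ∬_{ℝ²×ℝ²} F(z)F(z') log|z−z'| dz dz' = (1/4)·log(ε/|x|) + 2b₀ − 2b_ε(x), where b₀ := (1/(8π²)) ∬_{B_1(0)×B_1(0)} log|z−z'| dz dz' and b_ε(x) := (1/(8π²)) ∬_{B_1(0)×B_1(0)} log( |x + ε(z−z')| / |x| ) dz dz'. -/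

import Mathlib

/-!
Expanding `F(z) F(z')` turns the integral into the four mutual logarithmic energies of the discs
`B_ε(0)` and `B_ε(x)`. Translating and rescaling to unit discs, the energy of `B_ε(a)` and `B_ε(b)`
is `ε⁴ ∬_{B₁×B₁} log|a - b + ε(z - z')|`. For `a = b` the logarithm splits off `log ε` away from
the (null) diagonal; for `|a - b| = |x| > 2ε` the vector `x + ε(z - z')` never vanishes, and the
logarithm splits off `log |x|`. The two cross energies agree since `log|z - z'|` is symmetric.
-/

open Filter Topology MeasureTheory

namespace GFF

/-- The Euclidean plane `ℝ²`. -/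
abbrev Plane : Type := EuclideanSpace ℝ (Fin 2)

/-- `b₀ = (1/(8π²)) ∬_{B_1(0)×B_1(0)} log|z-z'| dz dz'`. -/
noncomputable def b0 : ℝ :=
  (1 / (8 * Real.pi ^ 2)) *
    ∫ z in Metric.closedBall (0 : Plane) 1,
      ∫ z' in Metric.closedBall (0 : Plane) 1, Real.log ‖z - z'‖

/-- `b_ε(x) = (1/(8π²)) ∬_{B_1(0)×B_1(0)} log(|x + ε(z-z')|/|x|) dz dz'`. -/
noncomputable def beps (ε : ℝ) (x : Plane) : ℝ :=
  (1 / (8 * Real.pi ^ 2)) *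
    ∫ z in Metric.closedBall (0 : Plane) 1,
      ∫ z' in Metric.closedBall (0 : Plane) 1, Real.log (‖x + ε • (z - z')‖ / ‖x‖)

end GFF

namespace GFF

/-- The two-point test function `F = (1/(2ε²))(𝟙_{B_ε(0)} - 𝟙_{B_ε(x)})`. -/
noncomputable def Ftwo (ε : ℝ) (x : Plane) (z : Plane) : ℝ :=
  (1 / (2 * ε ^ 2)) *
    ((Metric.closedBall (0 : Plane) ε).indicator (fun _ => (1 : ℝ)) z -
      (Metric.closedBall x ε).indicator (fun _ => (1 : ℝ)) z)

end GFF

open Metric Set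

theorem MeasureTheory.IntegrableOn.comp_sub_prod {G F : Type*} [MeasurableSpace G] [AddGroup G]
    [MeasurableAdd₂ G] [MeasurableNeg G] [NormedAddCommGroup F] {μ : Measure G} [SFinite μ]
    [μ.IsAddRightInvariant] {g : G → F} {K A B : Set G} (hg : IntegrableOn g K μ)
    (hK : MeasurableSet K) (hA : MeasurableSet A) (hB : MeasurableSet B) (hB' : μ B ≠ ⊤)
    (hAB : ∀ a ∈ A, ∀ b ∈ B, a - b ∈ K) :
    IntegrableOn (fun p : G × G => g (p.1 - p.2)) (A ×ˢ B) (μ.prod μ) := by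
  have : IsFiniteMeasure (μ.restrict B) := isFiniteMeasure_restrict.2 hB'
  have hKB : Integrable ((K ×ˢ B).indicator fun q : G × G => g q.1) (μ.prod μ) := by
    rw [integrable_indicator_iff (hK.prod hB), IntegrableOn, ← Measure.prod_restrict]
    exact hg.comp_fst _
  have hsheared := ((measurePreserving_sub_prod μ μ).integrable_comp hKB.aestronglyMeasurable).2 hKB
  refine hsheared.integrableOn.congr_fun (fun p hp => ?_) (hA.prod hB)
  simp [indicator_of_mem (show (p.1 - p.2, p.2) ∈ K ×ˢ B from ⟨hAB _ hp.1 _ hp.2, hp.2⟩)]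

theorem Set.indicator_prod_apply_eq_mul {α β M : Type*} [MulZeroOneClass M] (s : Set α)
    (t : Set β) (f : α × β → M) (p : α × β) :
    (s ×ˢ t).indicator f p = s.indicator (fun _ => 1) p.1 * t.indicator (fun _ => 1) p.2 * f p := by
  classical
  simp only [indicator_apply, mem_prod]
  split_ifs <;> simp_all

theorem MeasureTheory.ae_fst_ne_snd {α : Type*} [MeasurableSpace α] [MeasurableEq α]
    (μ ν : Measure α) [SFinite ν] [NullSingletonClass ν] : ∀ᵐ p ∂μ.prod ν, p.1 ≠ p.2 :=
  (Measure.ae_prod_iff_ae_ae measurableSet_diagonal.compl).2 <|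
    ae_of_all _ fun x => (ν.ae_ne x).mono fun _ => Ne.symm

section HaarMeasure

variable {E : Type*} [NormedAddCommGroup E] [NormedSpace ℝ E] [FiniteDimensional ℝ E]
  [MeasurableSpace E] [BorelSpace E] (μ : Measure E) [μ.IsAddHaarMeasure]

theorem integrableOn_log_norm_ball (r : ℝ) :
    IntegrableOn (fun x : E => Real.log ‖x‖) (ball 0 r) μ := by
  cases subsingleton_or_nontrivial E
  · simp [Subsingleton.elim _ (0 : E)]
  rcases lt_or_ge r 0 with hr | hr
  · simp [ball_eq_empty.2 hr.le]
  rw [integrableOn_fun_norm_addHaar, ← intervalIntegrable_iff_integrableOn_Ioo_of_le hr]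
  exact intervalIntegral.intervalIntegrable_log'.continuousOn_mul (by fun_prop)

theorem Bornology.IsBounded.integrableOn_log_norm {s : Set E} (hs : Bornology.IsBounded s) :
    IntegrableOn (fun x : E => Real.log ‖x‖) s μ :=
  let ⟨_, hr⟩ := hs.subset_ball 0
  (integrableOn_log_norm_ball μ _).mono_set hr

theorem integrableOn_log_norm_sub_closedBall_prod (a b : E) (r s : ℝ) :
    IntegrableOn (fun p : E × E => Real.log ‖p.1 - p.2‖)
      (closedBall a r ×ˢ closedBall b s) (μ.prod μ) :=
  ((isBounded_closedBall (x := a - b) (r := r + s)).integrableOn_log_norm μ).comp_sub_prod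
    measurableSet_closedBall measurableSet_closedBall measurableSet_closedBall
    measure_closedBall_lt_top.ne fun _ hz _ hz' =>
      (dist_sub_sub_le _ _ _ _).trans (add_le_add hz hz')

theorem setIntegral_closedBall_eq_pow_smul {F : Type*} [NormedAddCommGroup F] [NormedSpace ℝ F]
    (f : E → F) (c : E) {r : ℝ} (hr : 0 < r) :
    ∫ x in closedBall c r, f x ∂μ =
      r ^ Module.finrank ℝ E • ∫ y in closedBall 0 1, f (c + r • y) ∂μ := by
  rw [Measure.setIntegral_comp_smul_of_pos μ (fun y => f (c + y)) _ hr, smul_unitClosedBall,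
    Real.norm_of_nonneg hr.le, smul_inv_smul₀ (pow_ne_zero _ hr.ne'),
    ← (measurePreserving_add_left μ c).setIntegral_preimage_emb (measurableEmbedding_addLeft c)]
  simp

end HaarMeasure

namespace GFF

noncomputable def logKernel (p : Plane × Plane) : ℝ :=
  Real.log ‖p.1 - p.2‖

noncomputable def logEnergy (A B : Set Plane) : ℝ :=
  ∫ p in A ×ˢ B, logKernel p ∂(volume.prod volume)

theorem logEnergy_comm (A B : Set Plane) : logEnergy A B = logEnergy B A := by
  rw [logEnergy, ← setIntegral_prod_swap]
  simp only [logKernel, Prod.fst_swap, Prod.snd_swap, norm_sub_rev]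
  rfl

abbrev unitBallProd : Set (Plane × Plane) := closedBall 0 1 ×ˢ closedBall 0 1

theorem logEnergy_closedBall (a b : Plane) {ε : ℝ} (hε : 0 < ε) :
    logEnergy (closedBall a ε) (closedBall b ε) =
      ε ^ 4 * ∫ q in unitBallProd, Real.log ‖a - b + ε • (q.1 - q.2)‖ ∂(volume.prod volume) := by
  rw [logEnergy, closedBall_prod_same, setIntegral_closedBall_eq_pow_smul _ _ _ hε,
    ← Prod.mk_zero_zero, ← closedBall_prod_same]
  simp only [logKernel, Module.finrank_prod, finrank_euclideanSpace_fin, smul_eq_mul, Prod.fst_add,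
    Prod.snd_add, Prod.smul_fst, Prod.smul_snd]
  congr 2 with q
  congr 2
  module


theorem measureReal_unitBallProd : (volume.prod volume).real unitBallProd = Real.pi ^ 2 := by
  simp [measureReal_def, Measure.prod_prod, ENNReal.toReal_mul, Real.pi_pos.le, sq]

theorem isCompact_unitBallProd : IsCompact unitBallProd :=
  (isCompact_closedBall _ _).prod (isCompact_closedBall _ _)

theorem integrableOn_log_norm_sub_unitBallProd :
    IntegrableOn (fun q : Plane × Plane => Real.log ‖q.1 - q.2‖) unitBallProd
      (volume.prod volume) :=
  integrableOn_log_norm_sub_closedBall_prod volume 0 0 1 1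

theorem setIntegral_log_norm_smul_sub {ε : ℝ} (hε : 0 < ε) :
    ∫ q in unitBallProd, Real.log ‖ε • (q.1 - q.2)‖ ∂(volume.prod volume) =
      Real.pi ^ 2 * Real.log ε +
        ∫ q in unitBallProd, Real.log ‖q.1 - q.2‖ ∂(volume.prod volume) := by
  have hsplit : ∀ᵐ q ∂(volume.prod volume).restrict unitBallProd,
      Real.log ‖ε • (q.1 - q.2)‖ = Real.log ε + Real.log ‖q.1 - q.2‖ := by
    filter_upwards [ae_restrict_of_ae (ae_fst_ne_snd volume volume)] with q hq
    rw [norm_smul, Real.norm_of_nonneg hε.le,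
      Real.log_mul hε.ne' (norm_ne_zero_iff.2 (sub_ne_zero.2 hq))]
  have hconst : IntegrableOn (fun _ => Real.log ε) unitBallProd (volume.prod volume) :=
    integrableOn_const isCompact_unitBallProd.measure_lt_top.ne
  rw [integral_congr_ae hsplit, integral_add hconst integrableOn_log_norm_sub_unitBallProd,
    setIntegral_const, measureReal_unitBallProd, smul_eq_mul]

theorem norm_add_smul_sub_pos {ε : ℝ} {x : Plane} (hx : 2 * |ε| < ‖x‖) {q : Plane × Plane}
    (hq : q ∈ unitBallProd) : 0 < ‖x + ε • (q.1 - q.2)‖ := by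
  have hq' : ‖ε • (q.1 - q.2)‖ ≤ 2 * |ε| := by
    rw [norm_smul, Real.norm_eq_abs, mul_comm]
    gcongr
    have h1 : ‖q.1‖ ≤ 1 := mem_closedBall_zero_iff.1 hq.1
    have h2 : ‖q.2‖ ≤ 1 := mem_closedBall_zero_iff.1 hq.2
    linarith [norm_sub_le q.1 q.2]
  linarith [norm_le_add_norm_add x (ε • (q.1 - q.2))]

theorem integrableOn_log_norm_add_smul_sub_div {ε : ℝ} {x : Plane} (hx : 2 * |ε| < ‖x‖) :
    IntegrableOn (fun q : Plane × Plane => Real.log (‖x + ε • (q.1 - q.2)‖ / ‖x‖)) unitBallProd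
      (volume.prod volume) := by
  refine (ContinuousOn.log (by fun_prop) fun q hq => ?_).integrableOn_compact isCompact_unitBallProd
  exact (div_pos (norm_add_smul_sub_pos hx hq) ((by positivity : 0 ≤ 2 * |ε|).trans_lt hx)).ne'

theorem setIntegral_log_norm_add_smul_sub {ε : ℝ} {x : Plane} (hx : 2 * |ε| < ‖x‖) :
    ∫ q in unitBallProd, Real.log ‖x + ε • (q.1 - q.2)‖ ∂(volume.prod volume) =
      Real.pi ^ 2 * Real.log ‖x‖ +
        ∫ q in unitBallProd, Real.log (‖x + ε • (q.1 - q.2)‖ / ‖x‖) ∂(volume.prod volume) := by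
  have hx0 : 0 < ‖x‖ := (by positivity : 0 ≤ 2 * |ε|).trans_lt hx
  have hconst : IntegrableOn (fun _ => Real.log ‖x‖) unitBallProd (volume.prod volume) :=
    integrableOn_const isCompact_unitBallProd.measure_lt_top.ne
  rw [setIntegral_congr_fun isCompact_unitBallProd.measurableSet (g := fun q =>
      Real.log ‖x‖ + Real.log (‖x + ε • (q.1 - q.2)‖ / ‖x‖)) fun q hq => by
        dsimp only
        rw [Real.log_div (norm_add_smul_sub_pos hx hq).ne' hx0.ne', add_sub_cancel],
    integral_add hconst (integrableOn_log_norm_add_smul_sub_div hx), setIntegral_const,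
    measureReal_unitBallProd, smul_eq_mul]

theorem b0_eq : b0 = 1 / (8 * Real.pi ^ 2) *
    ∫ q in unitBallProd, Real.log ‖q.1 - q.2‖ ∂(volume.prod volume) := by
  rw [b0, setIntegral_prod _ integrableOn_log_norm_sub_unitBallProd]

theorem beps_eq {ε : ℝ} {x : Plane} (hx : 2 * |ε| < ‖x‖) : beps ε x = 1 / (8 * Real.pi ^ 2) *
    ∫ q in unitBallProd, Real.log (‖x + ε • (q.1 - q.2)‖ / ‖x‖) ∂(volume.prod volume) := by
  rw [beps, setIntegral_prod _ (integrableOn_log_norm_add_smul_sub_div hx)]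

theorem Ftwo_mul_Ftwo_mul_log (ε : ℝ) (x : Plane) :
    (fun p : Plane × Plane => Ftwo ε x p.1 * Ftwo ε x p.2 * Real.log ‖p.1 - p.2‖) =
      fun p => (1 / (2 * ε ^ 2)) ^ 2 *
        ((closedBall 0 ε ×ˢ closedBall 0 ε).indicator logKernel -
          (closedBall 0 ε ×ˢ closedBall x ε).indicator logKernel -
          ((closedBall x ε ×ˢ closedBall 0 ε).indicator logKernel -
            (closedBall x ε ×ˢ closedBall x ε).indicator logKernel)) p := by
  ext p
  simp only [Ftwo, logKernel, Pi.sub_apply, Set.indicator_prod_apply_eq_mul]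
  ring

theorem integrable_indicator_logKernel (a b : Plane) (ε : ℝ) :
    Integrable ((closedBall a ε ×ˢ closedBall b ε).indicator logKernel) (volume.prod volume) :=
  (integrableOn_log_norm_sub_closedBall_prod volume a b ε ε).integrable_indicator
    (measurableSet_closedBall.prod measurableSet_closedBall)

theorem integral_indicator_logKernel (a b : Plane) (ε : ℝ) :
    ∫ p, (closedBall a ε ×ˢ closedBall b ε).indicator logKernel p ∂(volume.prod volume) =
      logEnergy (closedBall a ε) (closedBall b ε) :=
  integral_indicator (measurableSet_closedBall.prod measurableSet_closedBall)

/-- The GFF variance functional for the two-point observable: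
`(1/(2π²)) ∬ F(z)F(z') log|z-z'| dz dz' = (1/4) log(ε/|x|) + 2b₀ - 2b_ε(x)`. -/
theorem gff_two_point (ε : ℝ) (hε : 0 < ε) (x : Plane) (hx : 2 * ε < ‖x‖) :
    Integrable (fun p : Plane × Plane =>
      Ftwo ε x p.1 * Ftwo ε x p.2 * Real.log ‖p.1 - p.2‖) ∧
    (1 / (2 * Real.pi ^ 2)) *
        (∫ p : Plane × Plane, Ftwo ε x p.1 * Ftwo ε x p.2 * Real.log ‖p.1 - p.2‖) =
      (1 / 4) * Real.log (ε / ‖x‖) + 2 * b0 - 2 * beps ε x := by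
  have hx' : 2 * |ε| < ‖x‖ := by rwa [abs_of_pos hε]
  have hI := integrable_indicator_logKernel (ε := ε)
  rw [Measure.volume_eq_prod, Ftwo_mul_Ftwo_mul_log]
  refine ⟨(((hI 0 0).sub (hI 0 x)).sub ((hI x 0).sub (hI x x))).const_mul _, ?_⟩
  rw [integral_const_mul, integral_sub' ((hI 0 0).sub (hI 0 x)) ((hI x 0).sub (hI x x)),
    integral_sub' (hI 0 0) (hI 0 x), integral_sub' (hI x 0) (hI x x)]
  simp only [integral_indicator_logKernel]
  rw [logEnergy_comm (closedBall 0 ε) (closedBall x ε), logEnergy_closedBall 0 0 hε,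
    logEnergy_closedBall x 0 hε, logEnergy_closedBall x x hε]
  simp only [sub_self, sub_zero, zero_add]
  rw [setIntegral_log_norm_smul_sub hε, setIntegral_log_norm_add_smul_sub hx', b0_eq,
    beps_eq hx', Real.log_div hε.ne' (by linarith)]
  field_simp
  ring

end GFF
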